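/- arXiv:2005.06304 — 3 statements merged into one kernel-verified Lean document; each statement's English description precedes it below -/
import Mathlib

section
/- Let Q be a quantaloid and let L ⊣ R be an adjunction between Q-categories D and E (L : D → E, R : E → D). Then a Q-category X is equivalent to Fix(RL) if and only if there exist essentially surjective Q-functors F : D → X and G : E → X such that E(LA, B) = X(FA, GB) for all A ∈ D₀ and B ∈ E₀. -/
universe u

/-- A quantaloid: a category whose hom-sets are complete lattices and whose
composition preserves arbitrary joins in each variable. -/
structure Quantaloid : Type (u + 1) where
  Obj : Type u
  Hom : Obj → Obj → Type u
  [lat : ∀ S T : Obj, CompleteLattice (Hom S T)]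
  comp : ∀ {S T U : Obj}, Hom T U → Hom S T → Hom S U
  one : ∀ S : Obj, Hom S S
  comp_assoc : ∀ {S T U V : Obj} (w : Hom U V) (v : Hom T U) (u : Hom S T),
      comp (comp w v) u = comp w (comp v u)
  comp_one : ∀ {S T : Obj} (u : Hom S T), comp u (one S) = u
  one_comp : ∀ {S T : Obj} (u : Hom S T), comp (one T) u = u
  comp_sSup : ∀ {S T U : Obj} (v : Hom T U) (s : Set (Hom S T)),
      comp v (sSup s) = ⨆ u ∈ s, comp v u
  sSup_comp : ∀ {S T U : Obj} (s : Set (Hom T U)) (u : Hom S T),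
      comp (sSup s) u = ⨆ v ∈ s, comp v u

attribute [instance] Quantaloid.lat

namespace Quantaloid

variable (Q : Quantaloid.{u})

/-- The left implication `w ↙ u`, characterized by `v ∘ u ≤ w ↔ v ≤ w ↙ u`. -/
def lda {S T U : Q.Obj} (w : Q.Hom S U) (u : Q.Hom S T) : Q.Hom T U :=
  sSup {v | Q.comp v u ≤ w}

/-- The right implication `v ↘ w`, characterized by `v ∘ u ≤ w ↔ u ≤ v ↘ w`. -/
def rda {S T U : Q.Obj} (v : Q.Hom T U) (w : Q.Hom S U) : Q.Hom S T :=
  sSup {u | Q.comp v u ≤ w}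

/-- Transport of a `Q`-arrow along equalities of objects. -/
def cast {S S' T T' : Q.Obj} (hS : S = S') (hT : T = T') (u : Q.Hom S T) : Q.Hom S' T' :=
  hS ▸ hT ▸ u

variable {Q}

theorem comp_mono_left {S T U : Q.Obj} {v v' : Q.Hom T U} (h : v ≤ v') (u : Q.Hom S T) :
    Q.comp v u ≤ Q.comp v' u := by
  have h1 : sSup ({v, v'} : Set (Q.Hom T U)) = v' := by
    rw [sSup_pair]; exact sup_eq_right.mpr h
  calc Q.comp v u ≤ ⨆ x ∈ ({v, v'} : Set (Q.Hom T U)), Q.comp x u :=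
        le_iSup₂ (f := fun x _ => Q.comp x u) v (by simp)
    _ = Q.comp (sSup ({v, v'} : Set (Q.Hom T U))) u := (Q.sSup_comp _ _).symm
    _ = Q.comp v' u := by rw [h1]

theorem comp_mono_right {S T U : Q.Obj} (v : Q.Hom T U) {u u' : Q.Hom S T} (h : u ≤ u') :
    Q.comp v u ≤ Q.comp v u' := by
  have h1 : sSup ({u, u'} : Set (Q.Hom S T)) = u' := by
    rw [sSup_pair]; exact sup_eq_right.mpr h
  calc Q.comp v u ≤ ⨆ x ∈ ({u, u'} : Set (Q.Hom S T)), Q.comp v x :=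
        le_iSup₂ (f := fun x _ => Q.comp v x) u (by simp)
    _ = Q.comp v (sSup ({u, u'} : Set (Q.Hom S T))) := (Q.comp_sSup _ _).symm
    _ = Q.comp v u' := by rw [h1]

theorem comp_lda_le {S T U : Q.Obj} (w : Q.Hom S U) (u : Q.Hom S T) :
    Q.comp (Q.lda w u) u ≤ w := by
  rw [lda, Q.sSup_comp]
  exact iSup₂_le fun v hv => hv

theorem comp_rda_le {S T U : Q.Obj} (v : Q.Hom T U) (w : Q.Hom S U) :
    Q.comp v (Q.rda v w) ≤ w := by
  rw [rda, Q.comp_sSup]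
  exact iSup₂_le fun u hu => hu

theorem le_lda {S T U : Q.Obj} {u : Q.Hom S T} {v : Q.Hom T U} {w : Q.Hom S U} :
    Q.comp v u ≤ w ↔ v ≤ Q.lda w u :=
  ⟨fun h => le_sSup h, fun h => le_trans (comp_mono_left h u) (comp_lda_le w u)⟩

theorem le_rda {S T U : Q.Obj} {u : Q.Hom S T} {v : Q.Hom T U} {w : Q.Hom S U} :
    Q.comp v u ≤ w ↔ u ≤ Q.rda v w :=
  ⟨fun h => le_sSup h, fun h => le_trans (comp_mono_right v h) (comp_rda_le v w)⟩

theorem cast_cast {S S' S'' T T' T'' : Q.Obj} (h1 : S = S') (h2 : T = T')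
    (h3 : S' = S'') (h4 : T' = T'') (u : Q.Hom S T) :
    Q.cast h3 h4 (Q.cast h1 h2 u) = Q.cast (h1.trans h3) (h2.trans h4) u := by
  subst h1; subst h2; subst h3; subst h4; rfl

theorem cast_mono {S S' T T' : Q.Obj} (hS : S = S') (hT : T = T') {u v : Q.Hom S T}
    (h : u ≤ v) : Q.cast hS hT u ≤ Q.cast hS hT v := by
  subst hS; subst hT; exact h

end Quantaloid
/-! ## Quantaloid-enriched categories -/

/-- A `Q`-category: a class of objects with extents and hom-arrows in `Q`. -/
structure QCat (Q : Quantaloid.{u}) : Type (u + 1) where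
  Obj : Type u
  ext : Obj → Q.Obj
  hom : ∀ X Y : Obj, Q.Hom (ext X) (ext Y)
  one_le : ∀ X, Q.one (ext X) ≤ hom X X
  comp_le : ∀ X Y Z, Q.comp (hom Y Z) (hom X Y) ≤ hom X Z

/-- A `Q`-relation between (the object classes of) two `Q`-categories. -/
abbrev QRel (Q : Quantaloid.{u}) (D E : QCat Q) : Type u :=
  ∀ (X : D.Obj) (Y : E.Obj), Q.Hom (D.ext X) (E.ext Y)

/-- The hom `Q`-relation of a `Q`-category. -/
def QCat.homRel {Q : Quantaloid.{u}} (E : QCat Q) : QRel Q E E := fun X Y => E.hom X Y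

/-- Composition of `Q`-relations. -/
def QRel.comp {Q : Quantaloid.{u}} {C D E : QCat Q} (Ψ : QRel Q D E) (Φ : QRel Q C D) :
    QRel Q C E :=
  fun X Z => ⨆ Y : D.Obj, Q.comp (Ψ Y Z) (Φ X Y)

/-- Left implication of `Q`-relations: `(Ξ ↙ Φ)(Y,Z) = ⋀_X Ξ(X,Z) ↙ Φ(X,Y)`. -/
def QRel.lda {Q : Quantaloid.{u}} {C D E : QCat Q} (Ξ : QRel Q C E) (Φ : QRel Q C D) :
    QRel Q D E :=
  fun Y Z => ⨅ X : C.Obj, Q.lda (Ξ X Z) (Φ X Y)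

/-- Right implication of `Q`-relations: `(Ψ ↘ Ξ)(X,Y) = ⋀_Z Ψ(Y,Z) ↘ Ξ(X,Z)`. -/
def QRel.rda {Q : Quantaloid.{u}} {C D E : QCat Q} (Ψ : QRel Q D E) (Ξ : QRel Q C E) :
    QRel Q C D :=
  fun X Y => ⨅ Z : E.Obj, Q.rda (Ψ Y Z) (Ξ X Z)

/-- A `Q`-relation between `Q`-categories is a `Q`-distributor if `E ∘ Φ ∘ D ≤ Φ`. -/
def IsDist {Q : Quantaloid.{u}} {D E : QCat Q} (Φ : QRel Q D E) : Prop :=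
  QRel.comp E.homRel (QRel.comp Φ D.homRel) ≤ Φ

/-- The one-object `Q`-category on an object `T` of `Q`, with hom `1_T`. -/
def singleQCat (Q : Quantaloid.{u}) (T : Q.Obj) : QCat Q where
  Obj := PUnit
  ext _ := T
  hom _ _ := Q.one T
  one_le _ := le_rfl
  comp_le _ _ _ := le_of_eq (Q.comp_one _)

/-- A sink of extent `T` on a `Q`-category `E`: a `Q`-relation `E₀ ⇸ {T}`. -/
abbrev Sink {Q : Quantaloid.{u}} (E : QCat Q) (T : Q.Obj) : Type u :=
  QRel Q E (singleQCat Q T)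

/-- A source of extent `T` on a `Q`-category `E`: a `Q`-relation `{T} ⇸ E₀`. -/
abbrev Source {Q : Quantaloid.{u}} (E : QCat Q) (T : Q.Obj) : Type u :=
  QRel Q (singleQCat Q T) E

/-- `Y` is the supremum of the sink `σ`: `Y` has extent `T` and `E(Y,−) = E ↙ σ`. -/
structure IsSup {Q : Quantaloid.{u}} (E : QCat Q) {T : Q.Obj} (σ : Sink E T) (Y : E.Obj) :
    Prop where
  ext : E.ext Y = T
  hom : ∀ Z : E.Obj, Q.cast ext rfl (E.hom Y Z) = QRel.lda E.homRel σ PUnit.unit Z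

/-- `Y` is the infimum of the source `τ`: `Y` has extent `T` and `E(−,Y) = τ ↘ E`. -/
structure IsInf {Q : Quantaloid.{u}} (E : QCat Q) {T : Q.Obj} (τ : Source E T) (Y : E.Obj) :
    Prop where
  ext : E.ext Y = T
  hom : ∀ Z : E.Obj, Q.cast rfl ext (E.hom Z Y) = QRel.rda τ E.homRel Z PUnit.unit

/-- A `Q`-category is total if every sink on it has a supremum. -/
def QCat.Total {Q : Quantaloid.{u}} (E : QCat Q) : Prop :=
  ∀ (T : Q.Obj) (σ : Sink E T), ∃ Y : E.Obj, IsSup E σ Y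

/-- A `Q`-functor between `Q`-categories. -/
structure QFun {Q : Quantaloid.{u}} (D E : QCat Q) : Type u where
  obj : D.Obj → E.Obj
  ext : ∀ X, E.ext (obj X) = D.ext X
  hom_le : ∀ X Y, D.hom X Y ≤ Q.cast (ext X) (ext Y) (E.hom (obj X) (obj Y))

/-- The graph `F_♮(X,Y) = E(FX,Y)` of a `Q`-functor. -/
def QFun.graph {Q : Quantaloid.{u}} {D E : QCat Q} (F : QFun D E) : QRel Q D E :=
  fun X Y => Q.cast (F.ext X) rfl (E.hom (F.obj X) Y)

/-- The cograph `F^♮(Y,X) = E(Y,FX)` of a `Q`-functor. -/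
def QFun.cograph {Q : Quantaloid.{u}} {D E : QCat Q} (F : QFun D E) : QRel Q E D :=
  fun Y X => Q.cast rfl (F.ext X) (E.hom Y (F.obj X))

/-- `Y` is the colimit of `F` weighted by the sink `σ`: `E(Y,−) = F_♮ ↙ σ`. -/
structure IsColim {Q : Quantaloid.{u}} {D E : QCat Q} (F : QFun D E) {T : Q.Obj}
    (σ : Sink D T) (Y : E.Obj) : Prop where
  ext : E.ext Y = T
  hom : ∀ Z : E.Obj, Q.cast ext rfl (E.hom Y Z) = QRel.lda F.graph σ PUnit.unit Z

/-- `Y` is the limit of `F` weighted by the source `τ`: `E(−,Y) = τ ↘ F^♮`. -/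
structure IsLim {Q : Quantaloid.{u}} {D E : QCat Q} (F : QFun D E) {T : Q.Obj}
    (τ : Source D T) (Y : E.Obj) : Prop where
  ext : E.ext Y = T
  hom : ∀ Z : E.Obj, Q.cast rfl ext (E.hom Z Y) = QRel.rda τ F.cograph Z PUnit.unit

/-- A `Q`-functor is dense if every object of its codomain is a weighted colimit of it. -/
def QFun.Dense {Q : Quantaloid.{u}} {D E : QCat Q} (F : QFun D E) : Prop :=
  ∀ Y : E.Obj, ∃ (T : Q.Obj) (σ : Sink D T), IsColim F σ Y

/-- A `Q`-functor is codense if every object of its codomain is a weighted limit of it. -/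
def QFun.Codense {Q : Quantaloid.{u}} {D E : QCat Q} (F : QFun D E) : Prop :=
  ∀ Y : E.Obj, ∃ (T : Q.Obj) (τ : Source D T), IsLim F τ Y

/-- The underlying (pre)order of a `Q`-category: `X ≤ Y` iff `|X| = |Y|` and
`1_{|X|} ≤ E(X,Y)`. -/
def QCat.le {Q : Quantaloid.{u}} (E : QCat Q) (X Y : E.Obj) : Prop :=
  ∃ h : E.ext X = E.ext Y, Q.cast rfl h (Q.one (E.ext X)) ≤ E.hom X Y

/-- `X ≅ Y` in the underlying order of a `Q`-category. -/
def QCat.iso {Q : Quantaloid.{u}} (E : QCat Q) (X Y : E.Obj) : Prop :=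
  E.le X Y ∧ E.le Y X

/-- A `Q`-category is separated if isomorphic objects are equal. -/
def QCat.Separated {Q : Quantaloid.{u}} (E : QCat Q) : Prop :=
  ∀ X Y : E.Obj, E.iso X Y → X = Y

/-- The identity `Q`-functor. -/
def QFun.id {Q : Quantaloid.{u}} (E : QCat Q) : QFun E E where
  obj X := X
  ext _ := rfl
  hom_le _ _ := le_rfl

/-- Composition of `Q`-functors. -/
def QFun.comp {Q : Quantaloid.{u}} {C D E : QCat Q} (G : QFun D E) (F : QFun C D) :
    QFun C E where
  obj X := G.obj (F.obj X)
  ext X := (G.ext (F.obj X)).trans (F.ext X)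
  hom_le X Y := by
    refine le_trans (F.hom_le X Y) ?_
    refine le_trans (Quantaloid.cast_mono (F.ext X) (F.ext Y)
      (G.hom_le (F.obj X) (F.obj Y))) ?_
    rw [Quantaloid.cast_cast]

/-- The full `Q`-subcategory of `E` on the objects satisfying `P`. -/
def QCat.full {Q : Quantaloid.{u}} (E : QCat Q) (P : E.Obj → Prop) : QCat Q where
  Obj := {X : E.Obj // P X}
  ext X := E.ext X.1
  hom X Y := E.hom X.1 Y.1
  one_le X := E.one_le X.1
  comp_le X Y Z := E.comp_le X.1 Y.1 Z.1

/-- The inclusion `Q`-functor of a full `Q`-subcategory. -/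
def QCat.incl {Q : Quantaloid.{u}} (E : QCat Q) (P : E.Obj → Prop) :
    QFun (E.full P) E where
  obj X := X.1
  ext _ := rfl
  hom_le _ _ := le_rfl

/-- The full `Q`-subcategory of fixed points of an endo-`Q`-functor. -/
def QCat.fix {Q : Quantaloid.{u}} (E : QCat Q) (F : QFun E E) : QCat Q :=
  E.full (fun X => E.iso (F.obj X) X)

/-- Adjoint `Q`-functors: `L ⊣ R` iff `E(LX,Y) = D(X,RY)`. -/
def QAdj {Q : Quantaloid.{u}} {D E : QCat Q} (L : QFun D E) (R : QFun E D) : Prop :=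
  ∀ (X : D.Obj) (Y : E.Obj), L.graph X Y = Q.cast rfl (R.ext Y) (D.hom X (R.obj Y))

/-- An essentially surjective `Q`-functor. -/
def QFun.EssSurj {Q : Quantaloid.{u}} {D E : QCat Q} (F : QFun D E) : Prop :=
  ∀ Y : E.Obj, ∃ X : D.Obj, E.iso Y (F.obj X)

/-- Equivalence of `Q`-categories. -/
def QEquiv {Q : Quantaloid.{u}} (D E : QCat Q) : Prop :=
  ∃ (F : QFun D E) (G : QFun E D),
    (∀ X, D.iso (G.obj (F.obj X)) X) ∧ (∀ Y, E.iso (F.obj (G.obj Y)) Y)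

/-- Isomorphism of `Q`-categories. -/
def QIso {Q : Quantaloid.{u}} (D E : QCat Q) : Prop :=
  ∃ (F : QFun D E) (G : QFun E D),
    (∀ X, G.obj (F.obj X) = X) ∧ (∀ Y, F.obj (G.obj Y) = Y)

/-- Tensor: `Y = f ⊗ X` iff `E(Y,−) = E(X,−) ↙ f`. -/
structure IsTensor {Q : Quantaloid.{u}} (E : QCat Q) {T : Q.Obj} (X : E.Obj)
    (f : Q.Hom (E.ext X) T) (Y : E.Obj) : Prop where
  ext : E.ext Y = T
  hom : ∀ Z : E.Obj, Q.cast ext rfl (E.hom Y Z) = Q.lda (E.hom X Z) f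

/-- Cotensor: `Y = g ⤳ X` iff `E(−,Y) = g ↘ E(−,X)`. -/
structure IsCotensor {Q : Quantaloid.{u}} (E : QCat Q) {T : Q.Obj} (X : E.Obj)
    (g : Q.Hom T (E.ext X)) (Y : E.Obj) : Prop where
  ext : E.ext Y = T
  hom : ∀ Z : E.Obj, Q.cast rfl ext (E.hom Z Y) = Q.rda g (E.hom Z X)
/-! ## The Isbell adjunction and its fixed points -/

section MCat

variable {Q : Quantaloid.{u}} {D E : QCat Q}

/-- The Isbell upper map of a `Q`-distributor `Φ : D ⇸ E` on (pre)sheaves: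
`Φ↑σ = Φ ↙ σ`. -/
def isbellUp (Φ : QRel Q D E) {T : Q.Obj} (σ : Sink D T) : Source E T :=
  QRel.lda Φ σ

/-- The Isbell lower map of a `Q`-distributor `Φ : D ⇸ E` on (co)presheaves:
`Φ↓τ = τ ↘ Φ`. -/
def isbellDown (Φ : QRel Q D E) {T : Q.Obj} (τ : Source E T) : Sink D T :=
  QRel.rda τ Φ

/-- `MΦ = Fix(Φ↓Φ↑)`: the full `Q`-subcategory of the presheaf `Q`-category of `D`
consisting of the presheaves fixed by the Isbell adjunction induced by `Φ`. -/
def MCat (Φ : QRel Q D E) : QCat Q where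
  Obj := Σ T : Q.Obj, {σ : Sink D T // IsDist σ ∧ isbellDown Φ (isbellUp Φ σ) = σ}
  ext p := p.1
  hom p q := QRel.lda q.2.1 p.2.1 PUnit.unit PUnit.unit
  one_le p := by
    refine le_iInf fun X => Quantaloid.le_lda.mp ?_
    exact le_of_eq (Q.one_comp _)
  comp_le p q r := by
    refine le_iInf fun X => Quantaloid.le_lda.mp ?_
    refine le_trans (le_of_eq (Q.comp_assoc _ _ _)) ?_
    have h1 : Q.comp (QRel.lda q.2.1 p.2.1 PUnit.unit PUnit.unit) (p.2.1 X PUnit.unit) ≤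
        q.2.1 X PUnit.unit := by
      refine le_trans (Quantaloid.comp_mono_left (iInf_le _ X) _) ?_
      exact Quantaloid.comp_lda_le _ _
    refine le_trans (Quantaloid.comp_mono_right _ h1) ?_
    refine le_trans (Quantaloid.comp_mono_left (iInf_le _ X) _) ?_
    exact Quantaloid.comp_lda_le _ _

end MCat
/-! ## Concrete categories over a base category -/

open CategoryTheory

/-- Transport of a morphism of `B` along equalities of objects. -/
def hcast {B : Type u} [Category.{u} B] {S S' T T' : B} (hS : S = S') (hT : T = T')
    (f : S ⟶ T) : S' ⟶ T' :=
  hS ▸ hT ▸ f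

/-- Transport of a set of morphisms of `B` along equalities of objects. -/
def scast {B : Type u} [Category.{u} B] {S S' T T' : B} (hS : S = S') (hT : T = T')
    (s : Set (S ⟶ T)) : Set (S' ⟶ T') :=
  hcast hS hT '' s

theorem hcast_hcast {B : Type u} [Category.{u} B] {S S' S'' T T' T'' : B}
    (h1 : S = S') (h2 : T = T') (h3 : S' = S'') (h4 : T' = T'') (f : S ⟶ T) :
    hcast h3 h4 (hcast h1 h2 f) = hcast (h1.trans h3) (h2.trans h4) f := by
  subst h1; subst h2; subst h3; subst h4; rfl

/-- A concrete category over a base category `B`, described by its objects, extents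
and hom-sets of `B`-morphisms. -/
structure ConcCat (B : Type u) [Category.{u} B] : Type (u + 1) where
  Obj : Type u
  ext : Obj → B
  hom : ∀ X Y : Obj, Set (ext X ⟶ ext Y)
  id_mem : ∀ X, 𝟙 (ext X) ∈ hom X X
  comp_mem : ∀ {X Y Z : Obj} {f : ext X ⟶ ext Y} {g : ext Y ⟶ ext Z},
      f ∈ hom X Y → g ∈ hom Y Z → f ≫ g ∈ hom X Z

variable {B : Type u} [Category.{u} B]

/-- A concrete functor over `B`. -/
structure ConcFun (D E : ConcCat B) : Type u where
  obj : D.Obj → E.Obj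
  ext : ∀ X, E.ext (obj X) = D.ext X
  mem : ∀ {X Y : D.Obj} {f : D.ext X ⟶ D.ext Y}, f ∈ D.hom X Y →
      hcast (ext X).symm (ext Y).symm f ∈ E.hom (obj X) (obj Y)

/-- The underlying (pre)order of a concrete category: `X ≤ Y` iff `|X| = |Y|` and
`1_{|X|} ∈ E(X,Y)`. -/
def ConcCat.le (E : ConcCat B) (X Y : E.Obj) : Prop :=
  ∃ h : E.ext X = E.ext Y, hcast rfl h (𝟙 (E.ext X)) ∈ E.hom X Y

/-- `X ≅ Y` in the underlying order of a concrete category. -/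
def ConcCat.iso (E : ConcCat B) (X Y : E.Obj) : Prop :=
  E.le X Y ∧ E.le Y X

/-- The identity concrete functor. -/
def ConcFun.id (E : ConcCat B) : ConcFun E E where
  obj X := X
  ext _ := rfl
  mem hf := hf

/-- Composition of concrete functors. -/
def ConcFun.comp {C D E : ConcCat B} (G : ConcFun D E) (F : ConcFun C D) :
    ConcFun C E where
  obj X := G.obj (F.obj X)
  ext X := (G.ext (F.obj X)).trans (F.ext X)
  mem {X Y f} hf := by
    have h := G.mem (F.mem hf)
    rw [hcast_hcast] at h
    exact h

/-- The full concrete subcategory on the objects satisfying `P`. -/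
def ConcCat.full (E : ConcCat B) (P : E.Obj → Prop) : ConcCat B where
  Obj := {X : E.Obj // P X}
  ext X := E.ext X.1
  hom X Y := E.hom X.1 Y.1
  id_mem X := E.id_mem X.1
  comp_mem hf hg := E.comp_mem hf hg

/-- The inclusion concrete functor of a full subcategory. -/
def ConcCat.incl (E : ConcCat B) (P : E.Obj → Prop) : ConcFun (E.full P) E where
  obj X := X.1
  ext _ := rfl
  mem hf := hf

/-- The full subcategory of fixed points of an endo concrete functor. -/
def ConcCat.fix (E : ConcCat B) (F : ConcFun E E) : ConcCat B :=
  E.full (fun X => E.iso (F.obj X) X)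

/-- A Galois correspondence `(L,R)` between concrete categories:
`E(LX,Y) = D(X,RY)` as subsets of `B(|X|,|Y|)`. -/
def Galois {D E : ConcCat B} (L : ConcFun D E) (R : ConcFun E D) : Prop :=
  ∀ (X : D.Obj) (Y : E.Obj),
    scast (L.ext X) rfl (E.hom (L.obj X) Y) = scast rfl (R.ext Y) (D.hom X (R.obj Y))

/-- An essentially surjective concrete functor. -/
def ConcFun.EssSurj {D E : ConcCat B} (F : ConcFun D E) : Prop :=
  ∀ Y : E.Obj, ∃ X : D.Obj, E.iso Y (F.obj X)

/-- Concrete equivalence of concrete categories. -/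
def ConcEquiv (D E : ConcCat B) : Prop :=
  ∃ (F : ConcFun D E) (G : ConcFun E D),
    (∀ X, D.iso (G.obj (F.obj X)) X) ∧ (∀ Y, E.iso (F.obj (G.obj Y)) Y)

/-- `Y` is an initial lifting of the `E`-structured source `(g_i : T → |X_i|)`. -/
structure IsInitialLifting (E : ConcCat B) {T : B} {ι : Type u} (X : ι → E.Obj)
    (g : ∀ i, T ⟶ E.ext (X i)) (Y : E.Obj) : Prop where
  ext : E.ext Y = T
  mem : ∀ i, hcast ext.symm rfl (g i) ∈ E.hom Y (X i)
  initial : ∀ (Z : E.Obj) (f : E.ext Z ⟶ T),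
      (∀ i, f ≫ g i ∈ E.hom Z (X i)) → hcast rfl ext.symm f ∈ E.hom Z Y

/-- `Y` is a final lifting of the `E`-structured sink `(f_i : |X_i| → T)`. -/
structure IsFinalLifting (E : ConcCat B) {T : B} {ι : Type u} (X : ι → E.Obj)
    (f : ∀ i, E.ext (X i) ⟶ T) (Y : E.Obj) : Prop where
  ext : E.ext Y = T
  mem : ∀ i, hcast rfl ext.symm (f i) ∈ E.hom (X i) Y
  final : ∀ (Z : E.Obj) (g : T ⟶ E.ext Z),
      (∀ i, f i ≫ g ∈ E.hom (X i) Z) → hcast ext.symm rfl g ∈ E.hom Y Z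

/-- A concrete category is topological over `B` if every structured source admits
an initial lifting. -/
def Topological (E : ConcCat B) : Prop :=
  ∀ (T : B) (ι : Type u) (X : ι → E.Obj) (g : ∀ i, T ⟶ E.ext (X i)),
    ∃ Y : E.Obj, IsInitialLifting E X g Y

/-- A concrete functor `F : D → E` is initially dense if every object of `E` is the
domain of an initial source with codomains in the image of `F`. -/
def InitiallyDense {D E : ConcCat B} (F : ConcFun D E) : Prop :=
  ∀ Y : E.Obj, ∃ (ι : Type u) (X : ι → D.Obj) (g : ∀ i, E.ext Y ⟶ E.ext (F.obj (X i))),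
    (∀ i, g i ∈ E.hom Y (F.obj (X i))) ∧
    ∀ (Z : E.Obj) (f : E.ext Z ⟶ E.ext Y),
      (∀ i, f ≫ g i ∈ E.hom Z (F.obj (X i))) → f ∈ E.hom Z Y

/-- A concrete functor `F : D → E` is finally dense if every object of `E` is the
codomain of a final sink with domains in the image of `F`. -/
def FinallyDense {D E : ConcCat B} (F : ConcFun D E) : Prop :=
  ∀ Y : E.Obj, ∃ (ι : Type u) (X : ι → D.Obj) (f : ∀ i, E.ext (F.obj (X i)) ⟶ E.ext Y),
    (∀ i, f i ∈ E.hom (F.obj (X i)) Y) ∧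
    ∀ (Z : E.Obj) (g : E.ext Y ⟶ E.ext Z),
      (∀ i, f i ≫ g ∈ E.hom (F.obj (X i)) Z) → g ∈ E.hom Y Z
/-! ## The free quantaloid and the `QB`-category associated to a concrete category -/

/-- The free quantaloid on a category `B`: hom-lattices are powersets of hom-sets,
with elementwise composition. -/
def freeQuantaloid (B : Type u) [Category.{u} B] : Quantaloid.{u} where
  Obj := B
  Hom S T := Set (S ⟶ T)
  lat _ _ := inferInstance
  comp := fun {S T U} g f => {h | ∃ a ∈ f, ∃ b ∈ g, a ≫ b = h}
  one S := {𝟙 S}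
  comp_assoc := by
    intro S T U V w v u
    ext h
    constructor
    · rintro ⟨a, ha, b, ⟨c, hc, d, hd, rfl⟩, rfl⟩
      exact ⟨a ≫ c, ⟨a, ha, c, hc, rfl⟩, d, hd, by simp⟩
    · rintro ⟨a, ⟨c, hc, e, he, rfl⟩, b, hb, rfl⟩
      exact ⟨c, hc, e ≫ b, ⟨e, he, b, hb, rfl⟩, by simp⟩
  comp_one := by
    intro S T u
    ext h
    simp
  one_comp := by
    intro S T u
    ext h
    simp
  comp_sSup := by
    intro S T U v s
    ext h
    simp only [Set.sSup_eq_sUnion, Set.mem_sUnion, Set.iSup_eq_iUnion, Set.mem_iUnion,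
      Set.mem_setOf_eq]
    constructor
    · rintro ⟨a, ⟨t, ht, hat⟩, b, hb, rfl⟩
      exact ⟨t, ht, a, hat, b, hb, rfl⟩
    · rintro ⟨t, ht, a, hat, b, hb, rfl⟩
      exact ⟨a, ⟨t, ht, hat⟩, b, hb, rfl⟩
  sSup_comp := by
    intro S T U s u
    ext h
    simp only [Set.sSup_eq_sUnion, Set.mem_sUnion, Set.iSup_eq_iUnion, Set.mem_iUnion,
      Set.mem_setOf_eq]
    constructor
    · rintro ⟨a, ha, b, ⟨t, ht, hbt⟩, rfl⟩
      exact ⟨t, ht, a, ha, b, hbt, rfl⟩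
    · rintro ⟨t, ht, a, ha, b, hbt, rfl⟩
      exact ⟨a, ha, b, ⟨t, ht, hbt⟩, rfl⟩

variable {B : Type u} [Category.{u} B]

instance {S T : B} : Membership (S ⟶ T) ((freeQuantaloid B).Hom S T) :=
  inferInstanceAs (Membership (S ⟶ T) (Set (S ⟶ T)))

theorem mem_qcast {S S' T T' : B} (hS : S = S') (hT : T = T')
    (s : Set (S ⟶ T)) (f : S' ⟶ T') :
    f ∈ (freeQuantaloid B).cast hS hT s ↔ hcast hS.symm hT.symm f ∈ s := by
  subst hS; subst hT; exact Iff.rfl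

/-- The `QB`-category associated to a concrete category over `B`. -/
def ConcCat.bar (E : ConcCat B) : QCat (freeQuantaloid B) where
  Obj := E.Obj
  ext := E.ext
  hom := E.hom
  one_le X := by
    intro h hh
    rcases hh with rfl
    exact E.id_mem X
  comp_le X Y Z := by
    rintro h ⟨a, ha, b, hb, rfl⟩
    exact E.comp_mem ha hb

/-- The `QB`-functor associated to a concrete functor over `B`. -/
def ConcFun.bar {D E : ConcCat B} (F : ConcFun D E) : QFun D.bar E.bar where
  obj := F.obj
  ext := F.ext
  hom_le X Y := by
    intro f hf
    exact (mem_qcast (F.ext X) (F.ext Y) _ f).mpr (F.mem hf)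

/-- The source on the `QB`-category `Ē` associated to an `E`-structured source
`(g_i : T → |X_i|)`, given by `τ̄(X) = {g_i ∣ X_i = X}`. -/
def barSource (E : ConcCat B) {T : B} {ι : Type u} (X : ι → E.Obj)
    (g : ∀ i, T ⟶ E.ext (X i)) : Source E.bar T :=
  fun _ Z => {f | ∃ (i : ι) (h : X i = Z), hcast rfl (congrArg E.ext h) (g i) = f}

/-- The sink on the `QB`-category `Ē` associated to an `E`-structured sink
`(f_i : |X_i| → T)`, given by `σ̄(X) = {f_i ∣ X_i = X}`. -/
def barSink (E : ConcCat B) {T : B} {ι : Type u} (X : ι → E.Obj)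
    (f : ∀ i, E.ext (X i) ⟶ T) : Sink E.bar T :=
  fun Z _ => {h | ∃ (i : ι) (hE : X i = Z), hcast (congrArg E.ext hE) rfl (f i) = h}

/-! The comparison functors `A ↦ RLA` and `B ↦ RB` into `Fix(RL)` are essentially surjective,
and the adjunction gives `E(LA,B) = E(LRLA,B) = D(RLA,RB)`; composing with an equivalence
`Fix(RL) → X`, which is fully faithful, carries both facts to `X`. Conversely, the hypothesis
together with the adjunction yields `X(FA,GB) = D(A,RB)`, hence `GB ≅ F(RB)`; so `F` restricted
to `Fix(RL)` is fully faithful and essentially surjective, and therefore an equivalence. -/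

namespace Quantaloid

variable {Q : Quantaloid.{u}}

theorem cast_heq {S S' T T' : Q.Obj} (hS : S = S') (hT : T = T') (u : Q.Hom S T) :
    Q.cast hS hT u ≍ u := by
  subst hS hT; rfl

theorem cast_eq_iff_heq {S S' T T' : Q.Obj} {hS : S = S'} {hT : T = T'} {u : Q.Hom S T}
    {v : Q.Hom S' T'} : Q.cast hS hT u = v ↔ u ≍ v := by
  subst hS hT; exact heq_iff_eq.symm

theorem cast_eq_cast_iff_heq {S₁ T₁ S₂ T₂ S T : Q.Obj} {hS₁ : S₁ = S} {hT₁ : T₁ = T}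
    {hS₂ : S₂ = S} {hT₂ : T₂ = T} {u : Q.Hom S₁ T₁} {v : Q.Hom S₂ T₂} :
    Q.cast hS₁ hT₁ u = Q.cast hS₂ hT₂ v ↔ u ≍ v := by
  subst hS₁ hT₁ hS₂ hT₂; exact heq_iff_eq.symm

theorem cast_le_iff {S S' T T' : Q.Obj} {hS : S = S'} {hT : T = T'} {u : Q.Hom S T}
    {v : Q.Hom S' T'} : Q.cast hS hT u ≤ v ↔ u ≤ Q.cast hS.symm hT.symm v := by
  subst hS hT; rfl

/-- `QCat.le X Y` is definitionally `OneLE (C.hom X Y)`. -/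
def OneLE {S T : Q.Obj} (a : Q.Hom S T) : Prop :=
  ∃ h : S = T, Q.cast rfl h (Q.one S) ≤ a

theorem OneLE.mono {S T : Q.Obj} {a b : Q.Hom S T} (ha : OneLE a) (hab : a ≤ b) : OneLE b :=
  let ⟨h, p⟩ := ha
  ⟨h, p.trans hab⟩

theorem OneLE.comp {S T U : Q.Obj} {a : Q.Hom S T} {b : Q.Hom T U} (ha : OneLE a)
    (hb : OneLE b) : OneLE (Q.comp b a) := by
  obtain ⟨rfl, ha⟩ := ha
  obtain ⟨rfl, hb⟩ := hb
  refine ⟨rfl, ?_⟩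
  calc Q.one S = Q.comp (Q.one S) (Q.one S) := (Q.comp_one _).symm
    _ ≤ Q.comp b a := (comp_mono_left hb _).trans (comp_mono_right _ ha)

theorem oneLE_iff_of_heq {S S' T T' : Q.Obj} (hS : S = S') (hT : T = T') {a : Q.Hom S T}
    {b : Q.Hom S' T'} (h : a ≍ b) : OneLE a ↔ OneLE b := by
  subst hS hT; rw [eq_of_heq h]

theorem cast_le_comp_comp {S S' T T' : Q.Obj} {u : Q.Hom S' S} {v : Q.Hom T T'}
    (hu : OneLE u) (hv : OneLE v) (hS : S = S') (hT : T = T') (a : Q.Hom S T) :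
    Q.cast hS hT a ≤ Q.comp v (Q.comp a u) := by
  subst hS hT
  obtain ⟨_, hu⟩ := hu
  obtain ⟨_, hv⟩ := hv
  calc a = Q.comp (Q.one T) (Q.comp a (Q.one S)) := by rw [Q.comp_one, Q.one_comp]
    _ ≤ Q.comp v (Q.comp a u) := (comp_mono_left hv _).trans
        (comp_mono_right _ (comp_mono_right _ hu))

end Quantaloid

open Quantaloid

namespace QCat

variable {Q : Quantaloid.{u}} {C : QCat Q} {X X' Y Y' Z : C.Obj}

theorem le_refl (C : QCat Q) (X : C.Obj) : C.le X X :=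
  ⟨rfl, C.one_le X⟩

theorem ext_eq_of_le (h : C.le X Y) : C.ext X = C.ext Y :=
  h.1

theorem le_trans (h : C.le X Y) (h' : C.le Y Z) : C.le X Z :=
  (OneLE.comp h h').mono (C.comp_le X Y Z)

theorem iso_refl (C : QCat Q) (X : C.Obj) : C.iso X X :=
  ⟨C.le_refl X, C.le_refl X⟩

theorem iso.symm (h : C.iso X Y) : C.iso Y X :=
  ⟨h.2, h.1⟩

theorem iso.trans (h : C.iso X Y) (h' : C.iso Y Z) : C.iso X Z :=
  ⟨le_trans h.1 h'.1, le_trans h'.2 h.2⟩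

theorem cast_hom_le_hom (hX : C.le X' X) (hY : C.le Y Y') (hS : C.ext X = C.ext X')
    (hT : C.ext Y = C.ext Y') : Q.cast hS hT (C.hom X Y) ≤ C.hom X' Y' :=
  (cast_le_comp_comp hX hY hS hT _).trans
    ((comp_mono_right _ (C.comp_le _ _ _)).trans (C.comp_le _ _ _))

theorem hom_heq_of_iso (hX : C.iso X X') (hY : C.iso Y Y') :
    C.hom X Y ≍ C.hom X' Y' := by
  obtain ⟨hS, -⟩ := hX.1
  obtain ⟨hT, -⟩ := hY.1
  refine cast_eq_iff_heq.1 (le_antisymm (cast_hom_le_hom hX.2 hY.1 hS hT) ?_)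
  exact cast_le_iff.1 (cast_hom_le_hom hX.1 hY.2 hS.symm hT.symm)

end QCat

namespace QFun

variable {Q : Quantaloid.{u}} {C D E : QCat Q}

theorem map_le (F : QFun D E) {X Y : D.Obj} (h : D.le X Y) : E.le (F.obj X) (F.obj Y) :=
  (oneLE_iff_of_heq (F.ext X).symm (F.ext Y).symm (cast_heq _ _ _)).1
    (OneLE.mono h (F.hom_le X Y))

theorem map_iso (F : QFun D E) {X Y : D.Obj} (h : D.iso X Y) : E.iso (F.obj X) (F.obj Y) :=
  ⟨F.map_le h.1, F.map_le h.2⟩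

theorem EssSurj.comp {G : QFun D E} {F : QFun C D} (hG : G.EssSurj) (hF : F.EssSurj) :
    (G.comp F).EssSurj := fun Z =>
  let ⟨Y, hY⟩ := hG Z
  let ⟨X, hX⟩ := hF Y
  ⟨X, hY.trans (G.map_iso hX)⟩

/-- Hom-arrows of `E` and `D` live over provably equal extents, so they are compared by `≍`. -/
def FullyFaithful (F : QFun D E) : Prop :=
  ∀ X Y : D.Obj, E.hom (F.obj X) (F.obj Y) ≍ D.hom X Y

theorem FullyFaithful.iso_iff {F : QFun D E} (hF : F.FullyFaithful) {X Y : D.Obj} :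
    E.iso (F.obj X) (F.obj Y) ↔ D.iso X Y :=
  and_congr (oneLE_iff_of_heq (F.ext X) (F.ext Y) (hF X Y))
    (oneLE_iff_of_heq (F.ext Y) (F.ext X) (hF Y X))

theorem fullyFaithful_of_comp_iso {Φ : QFun E D} {Ψ : QFun D E}
    (h : ∀ p, D.iso (Φ.obj (Ψ.obj p)) p) : Ψ.FullyFaithful := by
  intro p q
  refine cast_eq_iff_heq.1 (le_antisymm ?_ (Ψ.hom_le p q))
  calc Q.cast (Ψ.ext p) (Ψ.ext q) (E.hom (Ψ.obj p) (Ψ.obj q))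
      ≤ Q.cast (Ψ.ext p) (Ψ.ext q)
          (Q.cast _ _ (D.hom (Φ.obj (Ψ.obj p)) (Φ.obj (Ψ.obj q)))) :=
        cast_mono _ _ (Φ.hom_le _ _)
    _ = D.hom p q := by
        rw [Quantaloid.cast_cast, Quantaloid.cast_eq_iff_heq]
        exact D.hom_heq_of_iso (h p) (h q)

def codRestrict (F : QFun D E) (P : E.Obj → Prop) (h : ∀ X, P (F.obj X)) :
    QFun D (E.full P) where
  obj X := ⟨F.obj X, h X⟩
  ext := F.ext
  hom_le := F.hom_le

end QFun

theorem QEquiv.of_fullyFaithful_of_essSurj {Q : Quantaloid.{u}} {C X : QCat Q} {Ψ : QFun C X}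
    (hff : Ψ.FullyFaithful) (hes : Ψ.EssSurj) : QEquiv X C := by
  choose Φ hΦ using hes
  let Φ' : QFun X C :=
    { obj := Φ
      ext := fun x => (Ψ.ext (Φ x)).symm.trans (QCat.ext_eq_of_le (hΦ x).1).symm
      hom_le := fun x y => (Quantaloid.cast_eq_iff_heq.2
        ((X.hom_heq_of_iso (hΦ x) (hΦ y)).trans (hff _ _)).symm).ge }
  exact ⟨Φ', Ψ, fun x => (hΦ x).symm, fun p => hff.iso_iff.1 (hΦ (Ψ.obj p)).symm⟩

namespace QAdj

variable {Q : Quantaloid.{u}} {D E : QCat Q} {L : QFun D E} {R : QFun E D}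

theorem hom_heq (adj : QAdj L R) (A : D.Obj) (B : E.Obj) :
    E.hom (L.obj A) B ≍ D.hom A (R.obj B) :=
  cast_eq_cast_iff_heq.1 (adj A B)

theorem le_iff (adj : QAdj L R) {A : D.Obj} {B : E.Obj} :
    E.le (L.obj A) B ↔ D.le A (R.obj B) :=
  oneLE_iff_of_heq (L.ext A) (R.ext B).symm (adj.hom_heq A B)

theorem le_r_l (adj : QAdj L R) (A : D.Obj) : D.le A (R.obj (L.obj A)) :=
  adj.le_iff.1 (E.le_refl _)

theorem l_r_le (adj : QAdj L R) (B : E.Obj) : E.le (L.obj (R.obj B)) B :=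
  adj.le_iff.2 (D.le_refl _)

theorem r_l_r_iso (adj : QAdj L R) (B : E.Obj) : D.iso (R.obj (L.obj (R.obj B))) (R.obj B) :=
  ⟨R.map_le (adj.l_r_le B), adj.le_r_l _⟩

theorem l_r_l_iso (adj : QAdj L R) (A : D.Obj) : E.iso (L.obj (R.obj (L.obj A))) (L.obj A) :=
  ⟨adj.l_r_le _, L.map_le (adj.le_r_l A)⟩

theorem exists_essSurj_of_qEquiv_fix (adj : QAdj L R) {X : QCat Q}
    (h : QEquiv X (D.fix (R.comp L))) :
    ∃ (F : QFun D X) (G : QFun E X), F.EssSurj ∧ G.EssSurj ∧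
      ∀ A B, E.hom (L.obj A) B ≍ X.hom (F.obj A) (G.obj B) := by
  obtain ⟨Φ, Ψ, hΨΦ, hΦΨ⟩ := h
  have hΨ : Ψ.FullyFaithful := QFun.fullyFaithful_of_comp_iso hΦΨ
  have hΨ_essSurj : Ψ.EssSurj := fun x => ⟨Φ.obj x, (hΨΦ x).symm⟩
  let K : QFun D (D.fix (R.comp L)) := (R.comp L).codRestrict _ fun A => adj.r_l_r_iso (L.obj A)
  let J : QFun E (D.fix (R.comp L)) := R.codRestrict _ adj.r_l_r_iso
  refine ⟨Ψ.comp K, Ψ.comp J, hΨ_essSurj.comp fun p => ⟨p.1, p.2.symm⟩,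
    hΨ_essSurj.comp fun p => ⟨L.obj p.1, p.2.symm⟩, fun A B => ?_⟩
  have hom_r : E.hom (L.obj (R.obj (L.obj A))) B ≍ D.hom (K.obj A).1 (J.obj B).1 :=
    adj.hom_heq _ _
  exact ((E.hom_heq_of_iso (adj.l_r_l_iso A).symm (E.iso_refl B)).trans hom_r).trans
    (hΨ (K.obj A) (J.obj B)).symm

theorem qEquiv_fix_of_essSurj (adj : QAdj L R) {X : QCat Q} {F : QFun D X} {G : QFun E X}
    (hF : F.EssSurj) (hG : G.EssSurj)
    (h : ∀ A B, E.hom (L.obj A) B ≍ X.hom (F.obj A) (G.obj B)) :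
    QEquiv X (D.fix (R.comp L)) := by
  have hom_FG : ∀ A B, X.hom (F.obj A) (G.obj B) ≍ D.hom A (R.obj B) := fun A B =>
    (h A B).symm.trans (adj.hom_heq A B)
  have le_iff : ∀ {A B}, X.le (F.obj A) (G.obj B) ↔ D.le A (R.obj B) := fun {A B} =>
    oneLE_iff_of_heq (F.ext A) ((G.ext B).trans (R.ext B).symm) (hom_FG A B)
  have G_iso : ∀ B, X.iso (G.obj B) (F.obj (R.obj B)) := by
    intro B
    obtain ⟨A, hA⟩ := hF (G.obj B)
    exact ⟨QCat.le_trans hA.1 (F.map_le (le_iff.1 hA.2)), le_iff.2 (D.le_refl _)⟩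
  refine QEquiv.of_fullyFaithful_of_essSurj (Ψ := F.comp (D.incl _)) (fun p q => ?_) fun x => ?_
  · have hFq : X.iso (F.obj q.1) (G.obj (L.obj q.1)) := (F.map_iso q.2.symm).trans (G_iso _).symm
    exact ((X.hom_heq_of_iso (X.iso_refl _) hFq).trans (hom_FG _ _)).trans
      (D.hom_heq_of_iso (D.iso_refl _) q.2)
  · obtain ⟨B, hB⟩ := hG x
    exact ⟨⟨R.obj B, adj.r_l_r_iso B⟩, hB.trans (G_iso B)⟩

end QAdj

/-- Theorem 7.4 / [Lai–Shen]: for an adjunction `L ⊣ R` between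
`Q`-categories `D` and `E`, a `Q`-category `X` is equivalent to `Fix(RL)` if and only
if there exist essentially surjective `Q`-functors `F : D → X` and `G : E → X` with
`E(LA,B) = X(FA,GB)` for all objects `A` of `D` and `B` of `E`. -/
theorem fix_representation {Q : Quantaloid.{u}} {D E : QCat Q}
    (L : QFun D E) (R : QFun E D) (adj : QAdj L R) (X : QCat Q) :
    QEquiv X (QCat.fix D (QFun.comp R L)) ↔
      ∃ (F : QFun D X) (G : QFun E X), F.EssSurj ∧ G.EssSurj ∧
        ∀ (A : D.Obj) (B : E.Obj),
          Q.cast (L.ext A) rfl (E.hom (L.obj A) B) =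
            Q.cast (F.ext A) (G.ext B) (X.hom (F.obj A) (G.obj B)) := by
  simp only [cast_eq_cast_iff_heq]
  exact ⟨adj.exists_essSurj_of_qEquiv_fix,
    fun ⟨_, _, hF, hG, h⟩ => adj.qEquiv_fix_of_essSurj hF hG h⟩
end

section
/- Let (L,R) be a Galois correspondence between topological categories D and E over a base category B. Then a topological category X over B is concretely equivalent to Fix(RL) if and only if there exist finally dense concrete functors F : A → X and K : A → D and initially dense concrete functors G : C → X and H : C → E such that E(LKA,HC) = X(FA,GC) (as subsets of B(|A|,|HC|)) for all objects A of A and C of C. -/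
universe u

/-! ## Concrete categories over a base category -/

open CategoryTheory

variable {B : Type u} [Category.{u} B]

variable {B : Type u} [Category.{u} B]

/-!
If `X ≃ Fix(RL)` via `Φ, Ψ`, take `K = 1_D`, `H = 1_E`, `G = Ψ ∘ R` and `F = G ∘ L`: then
`X(Fa, Gc) = D(RLa, Rc) = E(LRLa, c) = E(La, c)`, and `G`, `F` are essentially surjective
because every fixed point `d` satisfies `d ≅ RLd`.

Conversely the Galois correspondence turns the hypothesis into `D(Ka, RHc) = X(Fa, Gc)`.
Give `x ∈ X` the initial `D`-structure `Φx` of all `X`-maps `x → Gc`, read as maps into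
`RHc`, and `d ∈ D` the initial `X`-structure `Ψd` of all `D`-maps `d → RHc`, read as maps
into `Gc`. A source into `R`-images is `RL`-fixed, so `Φ` lands in `Fix(RL)`. Final
density of `F` and of `K` gives `x ≤ ΨΦx` and `d ≤ ΦΨd`; initial density of `G` gives
`ΨΦx ≤ x`, and initial density of `H`, pushed through the right adjoint `R`, gives
`ΦΨd ≤ RLd ≤ d`.
-/

namespace ConcCat

variable (E : ConcCat B)

/-- The extents of `X` and `Y` need only be propositionally equal to `S` and `T`, so that
one `B`-morphism can be compared across concrete categories without transport. -/
def IsMor (X Y : E.Obj) {S T : B} (f : S ⟶ T) : Prop :=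
  ∃ (hS : E.ext X = S) (hT : E.ext Y = T), eqToHom hS ≫ f ≫ eqToHom hT.symm ∈ E.hom X Y

variable {E} {X Y Z : E.Obj} {S T U : B}

@[simp]
theorem isMor_iff_mem (f : E.ext X ⟶ E.ext Y) : E.IsMor X Y f ↔ f ∈ E.hom X Y :=
  ⟨fun ⟨_, _, h⟩ => by simpa using h, fun h => ⟨rfl, rfl, by simpa using h⟩⟩

theorem IsMor.src_eq {f : S ⟶ T} (h : E.IsMor X Y f) : E.ext X = S := h.1

theorem IsMor.tgt_eq {f : S ⟶ T} (h : E.IsMor X Y f) : E.ext Y = T := h.2.1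

@[simp]
theorem isMor_eqToHom_comp_iff (h : S = T) (f : T ⟶ U) :
    E.IsMor X Y (eqToHom h ≫ f) ↔ E.IsMor X Y f := by
  subst h; simp

@[simp]
theorem isMor_comp_eqToHom_iff (f : S ⟶ T) (h : T = U) :
    E.IsMor X Y (f ≫ eqToHom h) ↔ E.IsMor X Y f := by
  subst h; simp

theorem IsMor.comp {f : S ⟶ T} {g : T ⟶ U} (hf : E.IsMor X Y f) (hg : E.IsMor Y Z g) :
    E.IsMor X Z (f ≫ g) := by
  obtain ⟨hS, hT, hf⟩ := hf
  obtain ⟨hT', hU, hg⟩ := hg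
  subst hS hT hU
  simpa using E.comp_mem hf hg

theorem isMor_id (h : E.ext X = S) : E.IsMor X X (𝟙 S) := by
  subst h; exact (isMor_iff_mem _).2 (E.id_mem X)

theorem hcast_mem_iff_isMor (hS : S = E.ext X) (hT : T = E.ext Y) (f : S ⟶ T) :
    hcast hS hT f ∈ E.hom X Y ↔ E.IsMor X Y f := by
  subst hS hT; simp [hcast]

theorem mem_scast_iff_isMor (hS : E.ext X = S) (hT : E.ext Y = T) (f : S ⟶ T) :
    f ∈ scast hS hT (E.hom X Y) ↔ E.IsMor X Y f := by
  subst hS hT; simp [scast, hcast]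

theorem scast_hom_eq_scast_hom_iff {E' : ConcCat B} {X' Y' : E'.Obj}
    (hS : E.ext X = S) (hT : E.ext Y = T) (hS' : E'.ext X' = S) (hT' : E'.ext Y' = T) :
    scast hS hT (E.hom X Y) = scast hS' hT' (E'.hom X' Y') ↔
      ∀ {S₁ T₁ : B} (f : S₁ ⟶ T₁), E.IsMor X Y f ↔ E'.IsMor X' Y' f := by
  constructor
  · intro h S₁ T₁ f
    constructor <;> intro hf
    · obtain rfl : S₁ = S := hf.src_eq.symm.trans hS
      obtain rfl : T₁ = T := hf.tgt_eq.symm.trans hT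
      rwa [← mem_scast_iff_isMor hS' hT', ← h, mem_scast_iff_isMor]
    · obtain rfl : S₁ = S := hf.src_eq.symm.trans hS'
      obtain rfl : T₁ = T := hf.tgt_eq.symm.trans hT'
      rwa [← mem_scast_iff_isMor hS hT, h, mem_scast_iff_isMor]
  · intro h
    ext f
    rw [mem_scast_iff_isMor, mem_scast_iff_isMor, h]

theorem le_iff_isMor_id : E.le X Y ↔ E.IsMor X Y (𝟙 (E.ext X)) :=
  ⟨fun ⟨h, hm⟩ => (hcast_mem_iff_isMor rfl h _).1 hm,
    fun hf => ⟨hf.tgt_eq.symm, (hcast_mem_iff_isMor rfl _ _).2 hf⟩⟩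

theorem le_of_isMor_id (h : E.IsMor X Y (𝟙 S)) : E.le X Y := by
  obtain rfl := h.src_eq
  exact le_iff_isMor_id.2 h

theorem IsMor.of_le_left {f : S ⟶ T} (hXY : E.le X Y) (hf : E.IsMor Y Z f) :
    E.IsMor X Z f := by
  obtain rfl := hf.src_eq
  simpa using (le_iff_isMor_id.1 hXY).comp ((isMor_eqToHom_comp_iff hXY.1 _).2 hf)

theorem IsMor.of_le_right {f : S ⟶ T} (hf : E.IsMor X Y f) (hYZ : E.le Y Z) :
    E.IsMor X Z f := by
  obtain rfl := hf.tgt_eq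
  simpa using hf.comp (le_iff_isMor_id.1 hYZ)

theorem le_refl (X : E.Obj) : E.le X X :=
  le_iff_isMor_id.2 (isMor_id rfl)

theorem le_trans (hXY : E.le X Y) (hYZ : E.le Y Z) : E.le X Z :=
  le_iff_isMor_id.2 ((le_iff_isMor_id.1 hXY).of_le_right hYZ)

theorem iso_refl (X : E.Obj) : E.iso X X := ⟨le_refl X, le_refl X⟩

theorem iso_symm (h : E.iso X Y) : E.iso Y X := ⟨h.2, h.1⟩

theorem iso_trans (hXY : E.iso X Y) (hYZ : E.iso Y Z) : E.iso X Z :=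
  ⟨le_trans hXY.1 hYZ.1, le_trans hYZ.2 hXY.2⟩

theorem isMor_iff_of_iso_left {f : S ⟶ T} (h : E.iso X Y) : E.IsMor X Z f ↔ E.IsMor Y Z f :=
  ⟨fun hf => hf.of_le_left h.2, fun hf => hf.of_le_left h.1⟩

end ConcCat

namespace ConcFun

variable {D E : ConcCat B} {X Y : D.Obj} {S T : B}

theorem isMor (F : ConcFun D E) {f : S ⟶ T} (hf : D.IsMor X Y f) :
    E.IsMor (F.obj X) (F.obj Y) f := by
  obtain ⟨rfl, rfl, hm⟩ := hf
  rw [← ConcCat.hcast_mem_iff_isMor (F.ext X).symm (F.ext Y).symm]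
  simpa using F.mem hm

theorem le_map (F : ConcFun D E) (h : D.le X Y) : E.le (F.obj X) (F.obj Y) :=
  ConcCat.le_of_isMor_id (F.isMor (ConcCat.le_iff_isMor_id.1 h))

theorem iso_map (F : ConcFun D E) (h : D.iso X Y) : E.iso (F.obj X) (F.obj Y) :=
  ⟨F.le_map h.1, F.le_map h.2⟩

def ofIsMor (obj : D.Obj → E.Obj) (ext : ∀ X, E.ext (obj X) = D.ext X)
    (isMor : ∀ {X Y : D.Obj} {f : D.ext X ⟶ D.ext Y}, D.IsMor X Y f →
      E.IsMor (obj X) (obj Y) f) : ConcFun D E where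
  obj := obj
  ext := ext
  mem hf := (ConcCat.hcast_mem_iff_isMor _ _ _).2 (isMor ((D.isMor_iff_mem _).2 hf))

theorem isMor_of_isMor_map (F : ConcFun D E) (G : ConcFun E D)
    (hGF : ∀ X, D.iso (G.obj (F.obj X)) X) {f : S ⟶ T}
    (hf : E.IsMor (F.obj X) (F.obj Y) f) : D.IsMor X Y f :=
  ((G.isMor hf).of_le_left (hGF X).2).of_le_right (hGF Y).1

end ConcFun

namespace ConcCat

variable (E : ConcCat B) {ι : Type u}

structure IsInitialSource (Y : E.Obj) (X : ι → E.Obj) {T : B} {U : ι → B}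
    (g : ∀ i, T ⟶ U i) : Prop where
  ext : E.ext Y = T
  isMor : ∀ i, E.IsMor Y (X i) (g i)
  lift : ∀ (Z : E.Obj) {S : B} (f : S ⟶ T), E.ext Z = S →
    (∀ i, E.IsMor Z (X i) (f ≫ g i)) → E.IsMor Z Y f

structure IsFinalSink (X : ι → E.Obj) (Y : E.Obj) {T : B} {U : ι → B}
    (f : ∀ i, U i ⟶ T) : Prop where
  ext : E.ext Y = T
  isMor : ∀ i, E.IsMor (X i) Y (f i)
  desc : ∀ (Z : E.Obj) {V : B} (g : T ⟶ V), E.ext Z = V →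
    (∀ i, E.IsMor (X i) Z (f i ≫ g)) → E.IsMor Y Z g

variable {E}

theorem _root_.Topological.exists_isInitialSource (hE : Topological E) {T : B}
    (X : ι → E.Obj) {U : ι → B} (g : ∀ i, T ⟶ U i) (hU : ∀ i, E.ext (X i) = U i) :
    ∃ Y, E.IsInitialSource Y X g := by
  obtain ⟨Y, hY⟩ := hE T ι X fun i => g i ≫ eqToHom (hU i).symm
  refine ⟨Y, hY.ext, fun i => ?_, fun Z S f hZ hf => ?_⟩
  · simpa using (hcast_mem_iff_isMor _ _ _).1 (hY.mem i)
  · subst hZ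
    refine (hcast_mem_iff_isMor _ _ _).1 (hY.initial Z f fun i => (isMor_iff_mem _).1 ?_)
    rw [← Category.assoc, isMor_comp_eqToHom_iff]
    exact hf i

end ConcCat

section Density

variable {D E : ConcCat B}

theorem initiallyDense_iff (F : ConcFun D E) :
    InitiallyDense F ↔ ∀ Y : E.Obj, ∃ (ι : Type u) (X : ι → D.Obj)
      (g : ∀ i, E.ext Y ⟶ E.ext (F.obj (X i))),
        E.IsInitialSource Y (fun i => F.obj (X i)) g := by
  refine forall_congr' fun Y => exists_congr fun ι => exists_congr fun X =>
    exists_congr fun g => ?_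
  constructor
  · rintro ⟨hg, hinit⟩
    refine ⟨rfl, fun i => (E.isMor_iff_mem _).2 (hg i), fun Z S f hZ hf => ?_⟩
    subst hZ
    exact (E.isMor_iff_mem _).2 (hinit Z f fun i => (E.isMor_iff_mem _).1 (hf i))
  · intro h
    exact ⟨fun i => (E.isMor_iff_mem _).1 (h.isMor i),
      fun Z f hf => (E.isMor_iff_mem _).1 (h.lift Z f rfl fun i => (E.isMor_iff_mem _).2 (hf i))⟩

theorem finallyDense_iff (F : ConcFun D E) :
    FinallyDense F ↔ ∀ Y : E.Obj, ∃ (ι : Type u) (X : ι → D.Obj)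
      (f : ∀ i, E.ext (F.obj (X i)) ⟶ E.ext Y), E.IsFinalSink (fun i => F.obj (X i)) Y f := by
  refine forall_congr' fun Y => exists_congr fun ι => exists_congr fun X =>
    exists_congr fun f => ?_
  constructor
  · rintro ⟨hf, hfin⟩
    refine ⟨rfl, fun i => (E.isMor_iff_mem _).2 (hf i), fun Z V g hZ hg => ?_⟩
    subst hZ
    exact (E.isMor_iff_mem _).2 (hfin Z g fun i => (E.isMor_iff_mem _).1 (hg i))
  · intro h
    exact ⟨fun i => (E.isMor_iff_mem _).1 (h.isMor i),
      fun Z g hg => (E.isMor_iff_mem _).1 (h.desc Z g rfl fun i => (E.isMor_iff_mem _).2 (hg i))⟩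

theorem ConcFun.EssSurj.initiallyDense {F : ConcFun D E} (hF : F.EssSurj) : InitiallyDense F := by
  refine (initiallyDense_iff F).2 fun Y => ?_
  obtain ⟨X, hX⟩ := hF Y
  refine ⟨PUnit, fun _ => X, fun _ => eqToHom hX.1.1, ?_⟩
  refine ⟨rfl, fun _ => ?_, fun Z S f hZ hf => ?_⟩
  · simpa only [Category.id_comp] using
      (E.isMor_comp_eqToHom_iff _ _).2 (E.le_iff_isMor_id.1 hX.1)
  · simpa using (hf PUnit.unit).of_le_right hX.2

theorem ConcFun.EssSurj.finallyDense {F : ConcFun D E} (hF : F.EssSurj) : FinallyDense F := by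
  refine (finallyDense_iff F).2 fun Y => ?_
  obtain ⟨X, hX⟩ := hF Y
  refine ⟨PUnit, fun _ => X, fun _ => eqToHom hX.2.1, ?_⟩
  refine ⟨rfl, fun _ => ?_, fun Z V g hZ hg => ?_⟩
  · simpa only [Category.id_comp] using
      (E.isMor_comp_eqToHom_iff _ _).2 (E.le_iff_isMor_id.1 hX.2)
  · simpa using (hg PUnit.unit).of_le_left hX.1

end Density

namespace Galois

variable {D E : ConcCat B} {L : ConcFun D E} {R : ConcFun E D} {S T : B}

theorem isMor_iff (gal : Galois L R) (X : D.Obj) (Y : E.Obj) (f : S ⟶ T) :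
    E.IsMor (L.obj X) Y f ↔ D.IsMor X (R.obj Y) f :=
  (ConcCat.scast_hom_eq_scast_hom_iff _ _ _ _).1 (gal X Y) f

theorem le_unit (gal : Galois L R) (X : D.Obj) : D.le X (R.obj (L.obj X)) :=
  ConcCat.le_iff_isMor_id.2 ((gal.isMor_iff _ _ _).1 (ConcCat.isMor_id (L.ext X)))

theorem counit_le (gal : Galois L R) (Y : E.Obj) : E.le (L.obj (R.obj Y)) Y :=
  ConcCat.le_iff_isMor_id.2 ((gal.isMor_iff _ _ _).2 (ConcCat.isMor_id (L.ext _).symm))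

theorem rlr_iso (gal : Galois L R) (Y : E.Obj) : D.iso (R.obj (L.obj (R.obj Y))) (R.obj Y) :=
  ⟨R.le_map (gal.counit_le Y), gal.le_unit (R.obj Y)⟩

theorem isMor_rl_iff (gal : Galois L R) (X : D.Obj) (Y : E.Obj) (f : S ⟶ T) :
    D.IsMor (R.obj (L.obj X)) (R.obj Y) f ↔ E.IsMor (L.obj X) Y f := by
  rw [← gal.isMor_iff]
  exact ConcCat.isMor_iff_of_iso_left ⟨gal.counit_le _, L.le_map (gal.le_unit X)⟩

theorem isInitialSource_map (gal : Galois L R) {ι : Type u} {Y : E.Obj} {X : ι → E.Obj}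
    {T : B} {U : ι → B} {g : ∀ i, T ⟶ U i} (h : E.IsInitialSource Y X g) :
    D.IsInitialSource (R.obj Y) (fun i => R.obj (X i)) g where
  ext := (R.ext Y).trans h.ext
  isMor i := R.isMor (h.isMor i)
  lift Z _ f hZ hf := (gal.isMor_iff _ _ _).1 <|
    h.lift (L.obj Z) f ((L.ext Z).trans hZ) fun i => (gal.isMor_iff _ _ _).2 (hf i)

theorem iso_of_isInitialSource (gal : Galois L R) {ι : Type u} {Y : D.Obj} {X : ι → E.Obj}
    {T : B} {U : ι → B} {g : ∀ i, T ⟶ U i}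
    (h : D.IsInitialSource Y (fun i => R.obj (X i)) g) :
    D.iso (R.obj (L.obj Y)) Y := by
  refine ⟨ConcCat.le_of_isMor_id (h.lift _ (𝟙 T) ((R.ext _).trans ((L.ext Y).trans h.ext))
    fun i => ?_), gal.le_unit Y⟩
  rw [Category.id_comp, ← gal.isMor_iff]
  exact ((gal.isMor_iff _ _ _).2 (h.isMor i)).of_le_left (gal.counit_le _)

def toFix (gal : Galois L R) : ConcFun E (D.fix (R.comp L)) where
  obj Y := ⟨R.obj Y, gal.rlr_iso Y⟩
  ext := R.ext
  mem := R.mem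

end Galois

section Transfer

variable {C₁ C₂ : ConcCat B} {κ : Type u} (P : κ → C₁.Obj) (Q : κ → C₂.Obj)

/-- `y` carries the initial structure induced by all `C₁`-morphisms from `x` into the
objects `P k`, each read as a map into `Q k`. -/
def IsTransfer (x : C₁.Obj) (y : C₂.Obj) : Prop :=
  C₂.IsInitialSource y
    (fun i : Σ k, {g : C₁.ext x ⟶ C₁.ext (P k) // g ∈ C₁.hom x (P k)} => Q i.1)
    (fun i => i.2.1)

variable {P Q} {x z w : C₁.Obj} {y : C₂.Obj} {S T : B}

theorem exists_isTransfer (hC₂ : Topological C₂) (hPQ : ∀ k, C₁.ext (P k) = C₂.ext (Q k))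
    (x : C₁.Obj) : ∃ y, IsTransfer P Q x y :=
  hC₂.exists_isInitialSource _ _ fun i => (hPQ i.1).symm

theorem IsTransfer.isMor (h : IsTransfer P Q x y) {k : κ} {f : S ⟶ T}
    (hf : C₁.IsMor x (P k) f) : C₂.IsMor y (Q k) f := by
  obtain ⟨rfl, rfl, hm⟩ := hf
  exact h.isMor ⟨k, f, by simpa using hm⟩

theorem IsTransfer.lift (h : IsTransfer P Q x y) {Z : C₂.Obj} (f : S ⟶ T) (hZ : C₂.ext Z = S)
    (hT : C₁.ext x = T)
    (hf : ∀ k {V : B} (g : T ⟶ V), C₁.IsMor x (P k) g → C₂.IsMor Z (Q k) (f ≫ g)) :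
    C₂.IsMor Z y f := by
  subst hT
  exact h.lift Z f hZ fun ⟨k, g, hg⟩ => hf k g ((C₁.isMor_iff_mem _).2 hg)

theorem IsTransfer.isMor_of_isMor {a : C₁.Obj} {b : C₂.Obj}
    (hab : ∀ k {S V : B} (g : S ⟶ V), C₁.IsMor a (P k) g → C₂.IsMor b (Q k) g)
    (hb : C₂.ext b = C₁.ext a) (h : IsTransfer P Q x y) {f : S ⟶ T} (hf : C₁.IsMor a x f) :
    C₂.IsMor b y f :=
  h.lift f (hb.trans hf.src_eq) hf.tgt_eq fun k _ _ hg => hab k _ (hf.comp hg)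

theorem IsTransfer.map_isMor {x' : C₁.Obj} {y' : C₂.Obj} (h : IsTransfer P Q x y)
    (h' : IsTransfer P Q x' y') {f : S ⟶ T} (hf : C₁.IsMor x x' f) : C₂.IsMor y y' f :=
  h'.isMor_of_isMor (fun _ _ _ _ => h.isMor) h.ext hf

theorem le_of_isTransfer_of_finallyDense {A : ConcCat B} {F : ConcFun A C₁} {K : ConcFun A C₂}
    (hF : FinallyDense F) (hPQ : ∀ k, C₁.ext (P k) = C₂.ext (Q k))
    (hFK : ∀ a k {S V : B} (g : S ⟶ V),
      C₁.IsMor (F.obj a) (P k) g ↔ C₂.IsMor (K.obj a) (Q k) g)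
    (hxy : IsTransfer P Q x y) (hyz : IsTransfer Q P y z) : C₁.le x z := by
  obtain ⟨_, as, fs, hsink⟩ := (finallyDense_iff F).1 hF x
  have hfs : ∀ j, C₂.IsMor (K.obj (as j)) y (fs j) := fun j =>
    hxy.isMor_of_isMor (fun k _ _ g => (hFK _ k g).1) ((K.ext _).trans (F.ext _).symm)
      (hsink.isMor j)
  refine C₁.le_of_isMor_id (hyz.lift (𝟙 _) rfl hxy.ext fun k V g hg => ?_)
  rw [Category.id_comp]
  exact hsink.desc (P k) g ((hPQ k).trans hg.tgt_eq) fun j => (hFK _ k _).2 ((hfs j).comp hg)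

theorem le_of_isTransfer_of_isInitialSource (hxy : IsTransfer P Q x y)
    (hyz : IsTransfer Q P y z) {ι : Type u} {ks : ι → κ} {U : ι → B} {g : ∀ i, T ⟶ U i}
    (hw : C₁.IsInitialSource w (fun i => P (ks i)) g) (hxw : C₁.le x w) : C₁.le z w := by
  refine C₁.le_of_isMor_id (hw.lift z (𝟙 T) ?_ fun i => ?_)
  · exact hyz.ext.trans (hxy.ext.trans (hxw.1.trans hw.ext))
  · rw [Category.id_comp]
    exact hyz.isMor (hxy.isMor ((hw.isMor i).of_le_left hxw))

end Transfer

section FixRepresentation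

variable {D E X : ConcCat B} {L : ConcFun D E} {R : ConcFun E D}

theorem Galois.exists_dense_of_concEquiv (gal : Galois L R)
    (hX : ConcEquiv X (D.fix (R.comp L))) :
    ∃ (A C : ConcCat B) (F : ConcFun A X) (K : ConcFun A D) (G : ConcFun C X)
      (H : ConcFun C E), FinallyDense F ∧ FinallyDense K ∧ InitiallyDense G ∧
        InitiallyDense H ∧ ∀ (a : A.Obj) (c : C.Obj) {S T : B} (f : S ⟶ T),
          E.IsMor (L.obj (K.obj a)) (H.obj c) f ↔ X.IsMor (F.obj a) (G.obj c) f := by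
  obtain ⟨Φ, Ψ, hΨΦ, hΦΨ⟩ := hX
  let G := Ψ.comp gal.toFix
  have hG : ∀ x, X.iso x (G.obj (L.obj (Φ.obj x).1)) := fun x =>
    ConcCat.iso_symm (ConcCat.iso_trans (Ψ.iso_map (Φ.obj x).2) (hΨΦ x))
  refine ⟨D, E, G.comp L, ConcFun.id D, G, ConcFun.id E,
    ConcFun.EssSurj.finallyDense fun x => ⟨_, hG x⟩,
    ConcFun.EssSurj.finallyDense fun d => ⟨d, D.iso_refl d⟩,
    ConcFun.EssSurj.initiallyDense fun x => ⟨_, hG x⟩,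
    ConcFun.EssSurj.initiallyDense fun e => ⟨e, E.iso_refl e⟩, fun a c S T f => ?_⟩
  rw [← gal.isMor_rl_iff]
  exact ⟨Ψ.isMor (X := gal.toFix.obj (L.obj a)) (Y := gal.toFix.obj c),
    Ψ.isMor_of_isMor_map Φ hΦΨ⟩

theorem concEquiv_fix_of_dense (hD : Topological D) (hX : Topological X) (gal : Galois L R)
    {A C : ConcCat B} {F : ConcFun A X} {K : ConcFun A D} {G : ConcFun C X} {H : ConcFun C E}
    (hF : FinallyDense F) (hK : FinallyDense K) (hG : InitiallyDense G) (hH : InitiallyDense H)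
    (hFKGH : ∀ (a : A.Obj) (c : C.Obj) {S T : B} (f : S ⟶ T),
      E.IsMor (L.obj (K.obj a)) (H.obj c) f ↔ X.IsMor (F.obj a) (G.obj c) f) :
    ConcEquiv X (D.fix (R.comp L)) := by
  let Q c := R.obj (H.obj c)
  have hGQ c : X.ext (G.obj c) = D.ext (Q c) :=
    (G.ext c).trans ((H.ext c).symm.trans (R.ext _).symm)
  have hFK a c {S T : B} (f : S ⟶ T) :
      X.IsMor (F.obj a) (G.obj c) f ↔ D.IsMor (K.obj a) (Q c) f :=
    (hFKGH a c f).symm.trans (gal.isMor_iff _ _ f)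
  choose Φ hΦ using exists_isTransfer (P := G.obj) (Q := Q) hD hGQ
  choose Ψ hΨ using exists_isTransfer (P := Q) (Q := G.obj) hX fun c => (hGQ c).symm
  let Φ' : ConcFun X (D.fix (R.comp L)) :=
    ConcFun.ofIsMor (fun x => ⟨Φ x, gal.iso_of_isInitialSource (hΦ x)⟩) (fun x => (hΦ x).ext)
      fun hf => (hΦ _).map_isMor (hΦ _) hf
  let Ψ' : ConcFun (D.fix (R.comp L)) X :=
    ConcFun.ofIsMor (fun d => Ψ d.1) (fun d => (hΨ d.1).ext)
      fun hf => (hΨ _).map_isMor (hΨ _) hf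
  refine ⟨Φ', Ψ', fun x => ⟨?_, ?_⟩, fun d => ⟨?_, ?_⟩⟩
  · obtain ⟨_, _, _, hsrc⟩ := (initiallyDense_iff G).1 hG x
    exact le_of_isTransfer_of_isInitialSource (hΦ x) (hΨ _) hsrc (X.le_refl x)
  · exact le_of_isTransfer_of_finallyDense hF hGQ hFK (hΦ x) (hΨ _)
  · obtain ⟨_, _, _, hsrc⟩ := (initiallyDense_iff H).1 hH (L.obj d.1)
    exact D.le_trans (le_of_isTransfer_of_isInitialSource (hΨ d.1) (hΦ _)
      (gal.isInitialSource_map hsrc) (gal.le_unit d.1)) d.2.1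
  · exact le_of_isTransfer_of_finallyDense (C₁ := D) hK (fun c => (hGQ c).symm)
      (fun a c _ _ f => (hFK a c f).symm) (hΨ d.1) (hΦ _)

end FixRepresentation

theorem concrete_fix_representation_dense_general {B : Type u} [CategoryTheory.Category.{u} B]
    {D E : ConcCat B} (hD : Topological D)
    (L : ConcFun D E) (R : ConcFun E D) (gal : Galois L R)
    (X : ConcCat B) (hX : Topological X) :
    ConcEquiv X (ConcCat.fix D (ConcFun.comp R L)) ↔
      ∃ (A C : ConcCat B) (F : ConcFun A X) (K : ConcFun A D)
        (G : ConcFun C X) (H : ConcFun C E),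
        FinallyDense F ∧ FinallyDense K ∧ InitiallyDense G ∧ InitiallyDense H ∧
        ∀ (a : A.Obj) (c : C.Obj),
          scast ((L.ext (K.obj a)).trans (K.ext a)) (H.ext c)
              (E.hom (L.obj (K.obj a)) (H.obj c)) =
            scast (F.ext a) (G.ext c) (X.hom (F.obj a) (G.obj c)) := by
  simp only [ConcCat.scast_hom_eq_scast_hom_iff]
  exact ⟨gal.exists_dense_of_concEquiv, fun ⟨_, _, _, _, _, _, hF, hK, hG, hH, hFKGH⟩ =>
    concEquiv_fix_of_dense hD hX gal hF hK hG hH hFKGH⟩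

/-- Theorem 7.7: for a Galois correspondence `(L,R)` between
topological categories `D` and `E` over `B`, a topological category `X` over `B` is
concretely equivalent to `Fix(RL)` if and only if there exist finally dense concrete
functors `F : A → X`, `K : A → D` and initially dense concrete functors `G : C → X`,
`H : C → E` with `E(LKa,Hc) = X(Fa,Gc)` as subsets of `B(|a|,|Hc|)`. -/
theorem concrete_fix_representation_dense {B : Type u} [CategoryTheory.Category.{u} B]
    {D E : ConcCat B} (hD : Topological D) (hE : Topological E)
    (L : ConcFun D E) (R : ConcFun E D) (gal : Galois L R)
    (X : ConcCat B) (hX : Topological X) :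
    ConcEquiv X (ConcCat.fix D (ConcFun.comp R L)) ↔
      ∃ (A C : ConcCat B) (F : ConcFun A X) (K : ConcFun A D)
        (G : ConcFun C X) (H : ConcFun C E),
        FinallyDense F ∧ FinallyDense K ∧ InitiallyDense G ∧ InitiallyDense H ∧
        ∀ (a : A.Obj) (c : C.Obj),
          scast ((L.ext (K.obj a)).trans (K.ext a)) (H.ext c)
              (E.hom (L.obj (K.obj a)) (H.obj c)) =
            scast (F.ext a) (G.ext c) (X.hom (F.obj a) (G.obj c)) :=
  concrete_fix_representation_dense_general hD L R gal X hX
end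

section
/- Let E be a concrete category over a base category B and let τ = (g_i : T → |X_i|)_{i∈I} be an E-structured source. An object Y ∈ E₀ with |Y| = T is the initial lifting of τ if and only if Y is the infimum, in the QB-category Ē, of the source τ̄ : {T} ⇸ Ē₀ defined by τ̄(X) = {g_i : i ∈ I, X_i = X}; that is, Ē(−,Y) = τ̄ ↘ Ē. -/
universe u

/-! ## Concrete categories over a base category -/

open CategoryTheory

variable {B : Type u} [Category.{u} B]

variable {B : Type u} [Category.{u} B]

/-! In the free quantaloid the implication `v ↘ w` is computed elementwise, so
`(τ̄ ↘ Ē)(Z)` is the set of `f : |Z| → T` with `f ≫ g_i ∈ E(Z, X_i)` for all `i`. Hence both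
sides of the equivalence say `E(Z, Y) = {f | ∀ i, f ≫ g_i ∈ E(Z, X_i)}` for every `Z`; the
memberships `g_i ∈ E(Y, X_i)` of an initial lifting are recovered from `1_{|Y|} ∈ E(Y, Y)`. -/

theorem mem_freeQuantaloid_rda {S T U : B} (v : (freeQuantaloid B).Hom T U)
    (w : (freeQuantaloid B).Hom S U) (f : S ⟶ T) :
    f ∈ (freeQuantaloid B).rda v w ↔ ∀ b ∈ v, f ≫ b ∈ w := by
  constructor
  · rintro ⟨u, hu, hfu⟩ b hb
    exact hu ⟨f, hfu, b, hb, rfl⟩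
  · intro h
    refine ⟨{f}, ?_, rfl⟩
    rintro _ ⟨_, rfl, b, hb, rfl⟩
    exact h b hb

theorem rda_barSource_eq (E : ConcCat B) {T : B} {ι : Type u} (X : ι → E.Obj)
    (g : ∀ i, T ⟶ E.ext (X i)) (Z : E.Obj) :
    QRel.rda (barSource E X g) E.bar.homRel Z PUnit.unit =
      {f : E.ext Z ⟶ T | ∀ i, f ≫ g i ∈ E.hom Z (X i)} := by
  refine Set.ext fun f => Set.mem_iInter.trans ⟨fun h i => ?_, fun h W => ?_⟩
  · exact (mem_freeQuantaloid_rda _ _ f).mp (h (X i)) (g i) ⟨i, rfl, rfl⟩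
  · refine (mem_freeQuantaloid_rda _ _ f).mpr ?_
    rintro _ ⟨i, rfl, rfl⟩
    exact h i

theorem isInitialLifting_iff_forall_mem_iff (E : ConcCat B) {ι : Type u} {Y : E.Obj}
    (X : ι → E.Obj) (g : ∀ i, E.ext Y ⟶ E.ext (X i)) :
    IsInitialLifting E X g Y ↔ ∀ (Z : E.Obj) (f : E.ext Z ⟶ E.ext Y),
      f ∈ E.hom Z Y ↔ ∀ i, f ≫ g i ∈ E.hom Z (X i) := by
  constructor
  · rintro ⟨_, hmem, hinit⟩ Z f
    exact ⟨fun hf i => E.comp_mem hf (hmem i), hinit Z f⟩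
  · intro h
    refine ⟨rfl, fun i => ?_, fun Z f => (h Z f).mpr⟩
    have hid := (h Y (𝟙 _)).mp (E.id_mem Y) i
    rwa [Category.id_comp] at hid

theorem isInf_barSource_iff_forall_mem_iff (E : ConcCat B) {ι : Type u} {Y : E.Obj}
    (X : ι → E.Obj) (g : ∀ i, E.ext Y ⟶ E.ext (X i)) :
    IsInf E.bar (barSource E X g) Y ↔ ∀ (Z : E.Obj) (f : E.ext Z ⟶ E.ext Y),
      f ∈ E.hom Z Y ↔ ∀ i, f ≫ g i ∈ E.hom Z (X i) := by
  constructor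
  · rintro ⟨_, hom⟩ Z f
    have hZ := hom Z
    rw [rda_barSource_eq] at hZ
    exact Set.ext_iff.mp hZ f
  · intro h
    exact ⟨rfl, fun Z => (rda_barSource_eq E X g Z).symm ▸ Set.ext (h Z)⟩

/-- Proposition 4.5: for an `E`-structured source
`τ = (g_i : T → |X_i|)`, an object `Y` is an initial lifting of `τ` if and only if `Y`
is the infimum, in the `QB`-category `Ē`, of the source `τ̄` with
`τ̄(X) = {g_i ∣ X_i = X}`. -/
theorem initialLifting_iff_inf {B : Type u} [CategoryTheory.Category.{u} B]
    (E : ConcCat B) {T : B} {ι : Type u} (X : ι → E.Obj) (g : ∀ i, T ⟶ E.ext (X i))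
    (Y : E.Obj) :
    IsInitialLifting E X g Y ↔ IsInf E.bar (barSource E X g) Y := by
  have of_ext : E.ext Y = T → (IsInitialLifting E X g Y ↔ IsInf E.bar (barSource E X g) Y) := by
    rintro rfl
    exact (isInitialLifting_iff_forall_mem_iff E X g).trans
      (isInf_barSource_iff_forall_mem_iff E X g).symm
  exact ⟨fun h => (of_ext h.ext).mp h, fun h => (of_ext h.ext).mpr h⟩
end
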